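/- arXiv:1206.0877 — 3 statements merged into one kernel-verified Lean document; each statement's English description precedes it below -/
import Mathlib

section
/- Let H be a formal power series with H(0) ≠ 0, let G(x) = x·H(x), and let A be the unique formal power series with A(0) = 0 satisfying A(x) = x·H(A(x)). Then for all n ≥ k ≥ 1, the coefficient of x^n in A(x)^k equals (k/n)·[x^{2n−k}]G(x)^n. -/
/-! `A` is the compositional inverse of `f = X / H`, so `X ^ k = A ^ k ∘ f`. Multiply by
`H ^ (n - 1) * (H - X H') = (X / f) ^ (n + 1) * f'` and take the coefficient of `X ^ n`: for
`m ≤ n`, `[X ^ n] f ^ m * H ^ (n - 1) * (H - X H')` is the residue of `f ^ (m - n - 1) * f'`,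
namely `δ m n`, so only `[X ^ n] A ^ k` survives; on the other side the coefficient is
`(k / n) [X ^ (n - k)] H ^ n`. Both evaluations reduce to the identity
`(r + 1) [X ^ j] H ^ r (H - X H') = (r + 1 - j) [X ^ j] H ^ (r + 1)`, which is `X (H ^ (r + 1))'`
read coefficientwise. -/

open PowerSeries Finset

/-- Substitution of `G` (with zero constant term) into `F`: the composition `F(G(x))`. -/
noncomputable def pcomp {R : Type*} [CommRing R] (F G : PowerSeries R) : PowerSeries R :=
  PowerSeries.mk fun n => ∑ m ∈ range (n + 1), coeff m F * coeff n (G ^ m)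

namespace PowerSeries

variable {R : Type*} [CommRing R]

theorem coeff_pow_eq_zero_of_lt {f : R⟦X⟧} (hf : constantCoeff f = 0) {n m : ℕ} (h : n < m) :
    coeff n (f ^ m) = 0 :=
  coeff_of_lt_order _
    ((Nat.cast_lt.2 h).trans_le (le_order_pow_of_constantCoeff_eq_zero m hf))

theorem coeff_subst_eq_sum_range {f : R⟦X⟧} (hf : constantCoeff f = 0) (F : R⟦X⟧)
    {n N : ℕ} (hN : n < N) :
    coeff n (subst f F) = ∑ m ∈ range N, coeff m F * coeff n (f ^ m) := by
  rw [coeff_subst' (HasSubst.of_constantCoeff_zero' hf)]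
  refine finsum_eq_sum_of_support_subset _ fun m hm => ?_
  rw [coe_range, Set.mem_Iio]
  by_contra! hNm
  exact hm (by
    dsimp only
    rw [coeff_pow_eq_zero_of_lt hf (hN.trans_le hNm), smul_zero])

theorem coeff_subst_mul {f : R⟦X⟧} (hf : constantCoeff f = 0) (F D : R⟦X⟧) (n : ℕ) :
    coeff n (subst f F * D) = ∑ m ∈ range (n + 1), coeff m F * coeff n (f ^ m * D) := by
  simp_rw [coeff_mul, mul_sum]
  rw [sum_comm]
  refine sum_congr rfl fun p hp => ?_
  rw [coeff_subst_eq_sum_range hf F (Nat.antidiagonal.fst_lt hp), sum_mul]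
  exact sum_congr rfl fun m _ => mul_assoc _ _ _

theorem subst_eq_X_of_subst_eq_X {f g : R⟦X⟧} (hf : constantCoeff f = 0)
    (hf₁ : IsUnit (coeff 1 f)) (hg : constantCoeff g = 0) (hfg : subst g f = X) :
    subst f g = X := by
  have hg' : HasSubst g := HasSubst.of_constantCoeff_zero' hg
  set f' := substInvOfIsUnit f hf₁
  have hf' : f' = g := by
    calc f' = subst (subst g f) f' := by rw [hfg, X_subst]
      _ = subst g (subst f f') := (subst_comp_subst_apply (.of_constantCoeff_zero' hf) hg' _).symm
      _ = g := by rw [subst_substInvOfIsUnit_left f hf hf₁, subst_X hg']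
  rw [← hf', subst_substInvOfIsUnit_left f hf hf₁]

theorem coeff_X_mul_derivative (G : R⟦X⟧) (j : ℕ) :
    coeff j (X * d⁄dX R G) = j * coeff j G := by
  cases j with
  | zero => simp
  | succ i => rw [coeff_succ_X_mul, coeff_derivative, mul_comm]; push_cast; rfl

theorem coeff_pow_mul_sub_X_mul_derivative (H : R⟦X⟧) (r j : ℕ) :
    ((r : R) + 1) * coeff j (H ^ r * (H - X * d⁄dX R H))
      = ((r : R) + 1 - j) * coeff j (H ^ (r + 1)) := by
  have hD : X * d⁄dX R (H ^ (r + 1)) = (r + 1) • (X * (H ^ r * d⁄dX R H)) := by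
    rw [Derivation.leibniz_pow, Nat.add_sub_cancel, smul_eq_mul, mul_smul_comm]
  have hcoeff := congrArg (coeff j) hD
  rw [coeff_X_mul_derivative, map_nsmul, nsmul_eq_mul, Nat.cast_succ] at hcoeff
  rw [mul_sub, ← pow_succ, mul_left_comm, map_sub]
  linear_combination hcoeff

theorem coeff_X_pow_mul_pow_mul_sub_X_mul_derivative (H : R⟦X⟧) {k r : ℕ} (hk : k ≤ r + 1) :
    ((r : R) + 1) * coeff (r + 1) (X ^ k * (H ^ r * (H - X * d⁄dX R H)))
      = k * coeff (r + 1 - k) (H ^ (r + 1)) := by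
  rw [coeff_X_pow_mul', if_pos hk, coeff_pow_mul_sub_X_mul_derivative, Nat.cast_sub hk]
  push_cast
  ring

section Field

variable {K : Type*} [Field K]

theorem subst_X_mul_inv_eq_X {H A : K⟦X⟧} (hH : constantCoeff H ≠ 0)
    (hA : A = X * subst A H) : subst A (X * H⁻¹) = X := by
  have hA' : HasSubst A :=
    .of_constantCoeff_zero' (by rw [hA, map_mul, constantCoeff_X, zero_mul])
  calc subst A (X * H⁻¹) = X * subst A (H * H⁻¹) := by
        rw [subst_mul hA', subst_mul hA', subst_X hA']
        nth_rw 1 [hA]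
        ring
    _ = X := by rw [PowerSeries.mul_inv_cancel H hH, ← coe_substAlgHom hA', map_one, mul_one]

theorem coeff_X_mul_inv_pow_mul_self {H : K⟦X⟧} (hH : constantCoeff H ≠ 0) (r : ℕ) :
    coeff (r + 1) ((X * H⁻¹) ^ (r + 1) * (H ^ r * (H - X * d⁄dX K H))) = 1 := by
  rw [mul_pow, mul_assoc, coeff_X_pow_mul', if_pos le_rfl, Nat.sub_self,
    coeff_zero_eq_constantCoeff_apply]
  simp only [map_mul, map_pow, map_sub, constantCoeff_inv, constantCoeff_X, zero_mul, sub_zero]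
  rw [inv_pow, ← pow_succ, inv_mul_cancel₀ (pow_ne_zero _ hH)]

variable [CharZero K]

theorem coeff_X_mul_inv_pow_mul_eq_zero {H : K⟦X⟧} (hH : constantCoeff H ≠ 0) {m r : ℕ}
    (hm : m ≤ r) : coeff (r + 1) ((X * H⁻¹) ^ m * (H ^ r * (H - X * d⁄dX K H))) = 0 := by
  obtain ⟨s, rfl⟩ := Nat.exists_eq_add_of_le hm
  have hcancel : H⁻¹ ^ m * H ^ m = 1 := by
    rw [← mul_pow, PowerSeries.inv_mul_cancel H hH, one_pow]
  have hsplit : (X * H⁻¹) ^ m * (H ^ (m + s) * (H - X * d⁄dX K H))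
      = X ^ m * (H ^ s * (H - X * d⁄dX K H)) := by
    rw [mul_pow, pow_add]
    linear_combination (X ^ m * (H ^ s * (H - X * d⁄dX K H))) * hcancel
  have hres := coeff_pow_mul_sub_X_mul_derivative H s (s + 1)
  rw [Nat.cast_succ, sub_self, zero_mul] at hres
  rw [hsplit, show m + s + 1 = s + 1 + m by ring, coeff_X_pow_mul]
  exact (mul_eq_zero.1 hres).resolve_left (Nat.cast_add_one_ne_zero s)

theorem coeff_pow_eq_coeff_X_pow_mul_of_subst_eq_X {H A : K⟦X⟧} (hH : constantCoeff H ≠ 0)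
    (hA0 : constantCoeff A = 0) (hA : subst A (X * H⁻¹) = X) (k r : ℕ) :
    coeff (r + 1) (A ^ k) = coeff (r + 1) (X ^ k * (H ^ r * (H - X * d⁄dX K H))) := by
  set f : K⟦X⟧ := X * H⁻¹ with hf
  have hf0 : constantCoeff f = 0 := by rw [hf, map_mul, constantCoeff_X, zero_mul]
  have hf1 : IsUnit (coeff 1 f) := by
    rw [hf, coeff_succ_X_mul, coeff_zero_eq_constantCoeff_apply, constantCoeff_inv]
    exact (inv_ne_zero hH).isUnit
  have hXk : X ^ k = subst f (A ^ k) := by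
    rw [subst_pow (.of_constantCoeff_zero' hf0), subst_eq_X_of_subst_eq_X hf0 hf1 hA0 hA]
  rw [hXk, coeff_subst_mul hf0, sum_eq_single_of_mem (r + 1) (self_mem_range_succ _),
    coeff_X_mul_inv_pow_mul_self hH, mul_one]
  intro m hm hne
  rw [coeff_X_mul_inv_pow_mul_eq_zero hH (by rw [mem_range] at hm; omega), mul_zero]

end Field

end PowerSeries

theorem pcomp_eq_subst {R : Type*} [CommRing R] {f : R⟦X⟧} (hf : constantCoeff f = 0)
    (F : R⟦X⟧) : pcomp F f = subst f F := by
  ext n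
  rw [pcomp, coeff_mk, coeff_subst_eq_sum_range hf F n.lt_succ_self]

theorem stmt_6_general {K : Type*} [Field K] [CharZero K] (H A : PowerSeries K)
    (hH : constantCoeff H ≠ 0)
    (hA : A = X * pcomp H A) (n k : ℕ) (hk : 1 ≤ k) (hkn : k ≤ n) :
    coeff n (A ^ k) = (k : K) / (n : K) * coeff (2 * n - k) ((X * H) ^ n) := by
  have hA0 : constantCoeff A = 0 := by rw [hA, map_mul, constantCoeff_X, zero_mul]
  rw [pcomp_eq_subst hA0] at hA
  obtain ⟨r, rfl⟩ : ∃ r, n = r + 1 := ⟨n - 1, by omega⟩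
  have hrhs : coeff (2 * (r + 1) - k) ((X * H) ^ (r + 1)) = coeff (r + 1 - k) (H ^ (r + 1)) := by
    rw [mul_pow, coeff_X_pow_mul', if_pos (by omega),
      show 2 * (r + 1) - k - (r + 1) = r + 1 - k by omega]
  have hcoeff := coeff_X_pow_mul_pow_mul_sub_X_mul_derivative H hkn
  rw [coeff_pow_eq_coeff_X_pow_mul_of_subst_eq_X hH hA0 (subst_X_mul_inv_eq_X hH hA), hrhs]
  push_cast
  field_simp
  linear_combination hcoeff

theorem stmt_6 {K : Type*} [Field K] [CharZero K] (H A : PowerSeries K)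
    (hH : constantCoeff H ≠ 0) (hA0 : constantCoeff A = 0)
    (hA : A = X * pcomp H A) (n k : ℕ) (hk : 1 ≤ k) (hkn : k ≤ n) :
    coeff n (A ^ k) = (k : K) / (n : K) * coeff (2 * n - k) ((X * H) ^ n) :=
  stmt_6_general H A hH hA n k hk hkn
end

section
/- The formal power series A(x) = (1 + x − √(1 − 6x + x²))/4 satisfies the functional equation A(x) = x·(1 − A(x))/(1 − 2A(x)), i.e., A(x)·(1 − 2A(x)) = x·(1 − A(x)), with A(0) = 0. -/
/-!
Substituting `4A = 1 + X - S` turns `8 (A (1 - 2A) - X (1 - A))` into `S² - (1 - 6X + X²)`, so the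
functional equation is the defining quadratic of `S` up to the factor `8`, which cancels in any
additively torsion-free ring.
-/

open PowerSeries

theorem mul_one_sub_two_mul_eq_of_sq_eq {R : Type*} [CommRing R] [IsAddTorsionFree R]
    {x s a : R} (hs : s ^ 2 = 1 - 6 * x + x ^ 2) (ha : 4 * a = 1 + x - s) :
    a * (1 - 2 * a) = x * (1 - a) := by
  apply nsmul_right_injective (by norm_num : 8 ≠ 0)
  simp only [nsmul_eq_mul, Nat.cast_ofNat]
  linear_combination (s + 1 + x - 4 * a) * ha - hs

theorem stmt_11 (S A : PowerSeries ℚ) (hS0 : constantCoeff S = 1)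
    (hS : S ^ 2 = 1 - 6 * X + X ^ 2) (hA : 4 * A = 1 + X - S) :
    A * (1 - 2 * A) = X * (1 - A) ∧ constantCoeff A = 0 := by
  have := IsAddTorsionFree.of_module_rat ℚ⟦X⟧
  refine ⟨mul_one_sub_two_mul_eq_of_sq_eq hS hA, ?_⟩
  have hA0 := congrArg constantCoeff hA
  simp only [map_mul, map_add, map_sub, map_one, map_ofNat, constantCoeff_X, hS0] at hA0
  linarith
end

section
/- The composita of C(x) = (1 − √(1−4x))/2 is given by [x^n]C(x)^k = (k/n)·C(2n−k−1, n−1) for all n ≥ k ≥ 1. -/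
/-!
Completing the square turns `S² = 1 - 4X` into the Catalan equation `C = X + C²`, hence
`C^(k+1) = X C^k + C^(k+2)`: the coefficients `[xⁿ] C^k` satisfy the ballot-number recurrence
`[x^(n+1)] C^(k+1) = [xⁿ] C^k + [x^(n+1)] C^(k+2)`. By Pascal's rule the differences
`binom(2n-k-1, n-1) - binom(2n-k-1, n)` satisfy it too, with the same boundary values, and
`n binom(2n-k-1, n) = (n-k) binom(2n-k-1, n-1)` rewrites such a difference as
`(k/n) binom(2n-k-1, n-1)`.
-/

open PowerSeries

section CompletingTheSquare

variable {R : Type*} [CommRing R] [IsDomain R] [CharZero R] {S C : R⟦X⟧}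

theorem eq_X_add_sq_of_two_mul_eq_one_sub (hS : S ^ 2 = 1 - 4 * X) (hC : 2 * C = 1 - S) :
    C = X + C ^ 2 := by
  have h4 : (4 : R⟦X⟧) ≠ 0 := fun h ↦ by
    simpa [map_ofNat] using congrArg constantCoeff h
  refine mul_left_cancel₀ h4 ?_
  linear_combination (S + 1 - 2 * C) * hC - hS

theorem constantCoeff_eq_zero_of_two_mul_eq_one_sub (hS0 : constantCoeff S = 1)
    (hC : 2 * C = 1 - S) : constantCoeff C = 0 := by
  have h2C := congrArg constantCoeff hC
  rw [map_mul, map_sub, map_one, hS0, map_ofNat, sub_self] at h2C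
  exact (mul_eq_zero.mp h2C).resolve_left two_ne_zero

end CompletingTheSquare

theorem PowerSeries.coeff_pow_eq_zero_of_lt_s17 {R : Type*} [CommSemiring R] {C : R⟦X⟧}
    (h0 : constantCoeff C = 0) {m k : ℕ} (h : m < k) : coeff m (C ^ k) = 0 :=
  X_pow_dvd_iff.mp (pow_dvd_pow_of_dvd (X_dvd_iff.mpr h0) k) m h

section CatalanEquation

variable {R : Type*} [CommRing R] {C : R⟦X⟧}

theorem coeff_succ_pow_succ_of_eq_X_add_sq (hC : C = X + C ^ 2) (m k : ℕ) :
    coeff (m + 1) (C ^ (k + 1)) = coeff m (C ^ k) + coeff (m + 1) (C ^ (k + 2)) := by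
  have hpow : C ^ (k + 1) = X * C ^ k + C ^ (k + 2) := by
    calc C ^ (k + 1) = (X + C ^ 2) * C ^ k := by rw [← hC, pow_succ']
      _ = X * C ^ k + C ^ (k + 2) := by ring
  rw [hpow, map_add, coeff_succ_X_mul]

/-- Allowing `k = 0`, where both sides vanish by the symmetry of Pascal's triangle, lets the
recurrence run down to `k = 1`. -/
theorem coeff_succ_pow_eq_choose_sub_choose (hC : C = X + C ^ 2) (h0 : constantCoeff C = 0)
    (n : ℕ) : ∀ k ≤ n + 1,
      coeff (n + 1) (C ^ k) = ((2 * n + 1 - k).choose n : R) - (2 * n + 1 - k).choose (n + 1) := by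
  induction n with
  | zero =>
    intro k hk
    interval_cases k
    · simp [coeff_one]
    · simpa [coeff_pow_eq_zero_of_lt_s17 h0] using coeff_succ_pow_succ_of_eq_X_add_sq hC 0 0
  | succ n ih =>
    intro k hk
    induction hk using Nat.decreasingInduction with
    | self =>
      rw [coeff_succ_pow_succ_of_eq_X_add_sq hC, ih (n + 1) le_rfl,
        coeff_pow_eq_zero_of_lt_s17 h0 (by omega)]
      simp [show 2 * (n + 1) + 1 - (n + 2) = n + 1 by omega, show 2 * n + 1 - (n + 1) = n by omega]
    | of_succ k hk ih_succ =>
      cases k with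
      | zero => simp [coeff_one, Nat.choose_symm_half]
      | succ i =>
        rw [coeff_succ_pow_succ_of_eq_X_add_sq hC, ih i (by omega), ih_succ]
        obtain ⟨m, hm⟩ : ∃ m, 2 * n + 1 - i = m := ⟨_, rfl⟩
        rw [show 2 * (n + 1) + 1 - (i + 1 + 1) = m by omega,
          show 2 * (n + 1) + 1 - (i + 1) = m + 1 by omega, hm,
          Nat.choose_succ_succ m n, Nat.choose_succ_succ m (n + 1)]
        push_cast
        ring

end CatalanEquation

theorem cast_choose_sub_cast_choose_succ_eq_div_mul (n k : ℕ) (hk : k ≤ n + 1) :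
    ((2 * n + 1 - k).choose n : ℚ) - (2 * n + 1 - k).choose (n + 1) =
      k / (n + 1) * (2 * n + 1 - k).choose n := by
  have hsucc := Nat.choose_succ_right_eq (2 * n + 1 - k) n
  rw [show 2 * n + 1 - k - n = n + 1 - k by omega] at hsucc
  have hsuccℚ : ((2 * n + 1 - k).choose (n + 1) : ℚ) * (n + 1) =
      (2 * n + 1 - k).choose n * (n + 1 - k) := by
    exact_mod_cast hsucc
  rw [div_mul_eq_mul_div, eq_div_iff (by positivity)]
  linear_combination -hsuccℚ

theorem stmt_17 (S Cat : PowerSeries ℚ) (hS0 : constantCoeff S = 1)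
    (hS : S ^ 2 = 1 - 4 * X) (hC : 2 * Cat = 1 - S)
    (n k : ℕ) (hk : 1 ≤ k) (hkn : k ≤ n) :
    coeff n (Cat ^ k) = (k : ℚ) / (n : ℚ) * ((2 * n - k - 1).choose (n - 1) : ℚ) := by
  obtain ⟨n, rfl⟩ : ∃ m, n = m + 1 := ⟨n - 1, by omega⟩
  rw [coeff_succ_pow_eq_choose_sub_choose (eq_X_add_sq_of_two_mul_eq_one_sub hS hC)
      (constantCoeff_eq_zero_of_two_mul_eq_one_sub hS0 hC) n k hkn,
    cast_choose_sub_cast_choose_succ_eq_div_mul n k hkn, show 2 * (n + 1) - k - 1 = 2 * n + 1 - k by omega,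
    Nat.add_sub_cancel, Nat.cast_succ]
end
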